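/- Let $M_\epsilon$ be a family of nonnegative irreducible matrices indexed by a finite totally ordered set $T$ satisfying conditions (M.1)-(M.4), with limit diagonal values $\eta_i$, $T_0 = \{i : \eta_i = \max_j \eta_j\}$, $T_1 = T \setminus T_0$, and left Perron eigenvector $(c_\epsilon(i))$ normalized by $\sum_i b_\epsilon(i) c_\epsilon(i) = 1$ where $(b_\epsilon(i))$ is the right Perron eigenvector with $\sum_i b_\epsilon(i) = 1$. Then for each $i \in T_1$, $c_\epsilon(i) \asymp \sum_{j \in T_0} \sum_{w \in SP(j, i : T_1)} M_\epsilon(w) c_\epsilon(j)$ as $\epsilon \to 0$. -/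
import Mathlib


open Filter Set
open scoped Topology Classical

/-- The weight `M(w) = ∏ M(w_k w_{k+1})` of a path `w` of length `p + 2`. -/
noncomputable def pathWeight {m : ℕ} (M : Matrix (Fin m) (Fin m) ℝ) {p : ℕ}
    (w : Fin (p + 2) → Fin m) : ℝ :=
  ∏ k : Fin (p + 1), M (w k.castSucc) (w k.succ)

/-- `∑_{w ∈ SP(i, j : T₁)} M(w)`: the sum of the weights of all simple paths
from `i` to `j` whose vertices lie in `T₁ ∪ {i, j}`. -/
noncomputable def simplePathSum {m : ℕ} (M : Matrix (Fin m) (Fin m) ℝ)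
    (i j : Fin m) (T1 : Finset (Fin m)) : ℝ :=
  ∑ p ∈ Finset.range m, ∑ w ∈ Finset.univ.filter
      (fun w : Fin (p + 2) → Fin m => Function.Injective w ∧ w 0 = i ∧
        w (Fin.last (p + 1)) = j ∧ ∀ k, w k = i ∨ w k = j ∨ w k ∈ T1),
    pathWeight M w

/-- Asymptotic comparability of two families of reals as `ε → 0`. -/
def AsympF (f g : ℝ → ℝ) : Prop :=
  ∃ c ≥ (1:ℝ), ∃ ε₀ > (0:ℝ), ∀ ε : ℝ, 0 < ε → ε ≤ ε₀ →
    c⁻¹ * g ε ≤ f ε ∧ f ε ≤ c * g ε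

lemma pathWeight_nonneg {m : ℕ} {M : Matrix (Fin m) (Fin m) ℝ}
    (hA : ∀ u v, 0 ≤ M u v) {p : ℕ} (w : Fin (p + 2) → Fin m) :
    0 ≤ pathWeight M w :=
  Finset.prod_nonneg fun _ _ => hA _ _

lemma simplePathSum_nonneg {m : ℕ} {M : Matrix (Fin m) (Fin m) ℝ}
    (hA : ∀ u v, 0 ≤ M u v) (i j : Fin m) (S : Finset (Fin m)) :
    0 ≤ simplePathSum M i j S :=
  Finset.sum_nonneg fun _ _ => Finset.sum_nonneg fun w _ => pathWeight_nonneg hA w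

lemma pathWeight_snoc {m : ℕ} (M : Matrix (Fin m) (Fin m) ℝ) {p : ℕ}
    (w : Fin (p + 2) → Fin m) (i : Fin m) :
    pathWeight M (Fin.snoc w i) = pathWeight M w * M (w (Fin.last (p + 1))) i := by
  unfold pathWeight
  rw [Fin.prod_univ_castSucc]
  congr 1
  · apply Finset.prod_congr rfl
    intro k _
    rw [Fin.succ_castSucc]
    rw [Fin.snoc_castSucc, Fin.snoc_castSucc]
  · rw [Fin.succ_last, Fin.snoc_castSucc, Fin.snoc_last]

lemma snoc_injective {m p : ℕ} {w : Fin (p + 2) → Fin m} {i : Fin m}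
    (hw : Function.Injective w) (hi : ∀ t, w t ≠ i) :
    Function.Injective (Fin.snoc w i : Fin (p + 3) → Fin m) := by
  intro a b hab
  induction a using Fin.lastCases with
  | last =>
    induction b using Fin.lastCases with
    | last => rfl
    | cast b =>
      rw [Fin.snoc_last, Fin.snoc_castSucc] at hab
      exact absurd hab.symm (hi b)
  | cast a =>
    induction b using Fin.lastCases with
    | last =>
      rw [Fin.snoc_last, Fin.snoc_castSucc] at hab
      exact absurd hab (hi a)
    | cast b =>
      rw [Fin.snoc_castSucc, Fin.snoc_castSucc] at hab
      exact congrArg Fin.castSucc (hw hab)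

lemma chainLe {m : ℕ} (M : Matrix (Fin m) (Fin m) ℝ)
    (x : Fin m → ℝ) (lam : ℝ) (hlam : 0 ≤ lam)
    (hA : ∀ u v, 0 ≤ M u v)
    (hstep : ∀ u v, M u v * x u ≤ lam * x v) :
    ∀ (p : ℕ) (w : Fin (p + 2) → Fin m),
      pathWeight M w * x (w 0) ≤ lam ^ (p + 1) * x (w (Fin.last (p + 1))) := by
  intro p
  induction p with
  | zero =>
    intro w
    have h1 : pathWeight M w = M (w 0) (w 1) := by
      unfold pathWeight
      rw [Fin.prod_univ_one]
      rfl
    rw [h1, pow_one]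
    exact hstep (w 0) (w 1)
  | succ p ih =>
    intro w
    have hsp : pathWeight M w = pathWeight M (w ∘ Fin.castSucc) *
        M (w (Fin.last (p + 1)).castSucc) (w (Fin.last (p + 2))) := by
      unfold pathWeight
      rw [Fin.prod_univ_castSucc]
      congr 1
    have h0 : (w ∘ Fin.castSucc) 0 = w 0 := by
      simp
    have hlast : (w ∘ Fin.castSucc) (Fin.last (p + 1)) = w (Fin.last (p + 1)).castSucc := rfl
    have hih := ih (w ∘ Fin.castSucc)
    rw [h0, hlast] at hih
    set u := w (Fin.last (p + 1)).castSucc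
    set v := w (Fin.last (p + 2))
    calc pathWeight M w * x (w 0)
        = (pathWeight M (w ∘ Fin.castSucc) * x (w 0)) * M u v := by rw [hsp]; ring
      _ ≤ (lam ^ (p + 1) * x u) * M u v := by
            apply mul_le_mul_of_nonneg_right hih (hA u v)
      _ = lam ^ (p + 1) * (M u v * x u) := by ring
      _ ≤ lam ^ (p + 1) * (lam * x v) := by
            apply mul_le_mul_of_nonneg_left (hstep u v) (pow_nonneg hlam _)
      _ = lam ^ (p + 2) * x v := by ring

lemma edge_le_simplePathSum {m : ℕ} {M : Matrix (Fin m) (Fin m) ℝ}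
    (hA : ∀ u v, 0 ≤ M u v) {i j : Fin m} (hij : j ≠ i) (S : Finset (Fin m)) :
    M j i ≤ simplePathSum M j i S := by
  have hm : 0 < m := Fin.pos i
  set w₀ : Fin 2 → Fin m := ![j, i] with hw₀
  have hinj : Function.Injective w₀ := by
    intro a b hab
    fin_cases a <;> fin_cases b
    · rfl
    · exfalso; apply hij; simpa [hw₀] using hab
    · exfalso; apply hij; simpa [hw₀] using hab.symm
    · rfl
  have hmem : w₀ ∈ Finset.univ.filter
      (fun w : Fin (0 + 2) → Fin m => Function.Injective w ∧ w 0 = j ∧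
        w (Fin.last (0 + 1)) = i ∧ ∀ k, w k = j ∨ w k = i ∨ w k ∈ S) := by
    rw [Finset.mem_filter]
    refine ⟨Finset.mem_univ _, hinj, rfl, rfl, ?_⟩
    intro k
    fin_cases k
    · exact Or.inl rfl
    · exact Or.inr (Or.inl rfl)
  have hpw : pathWeight M w₀ = M j i := by
    unfold pathWeight
    rw [Fin.prod_univ_one]
    rfl
  have h1 : M j i ≤ ∑ w ∈ Finset.univ.filter
      (fun w : Fin (0 + 2) → Fin m => Function.Injective w ∧ w 0 = j ∧
        w (Fin.last (0 + 1)) = i ∧ ∀ k, w k = j ∨ w k = i ∨ w k ∈ S),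
      pathWeight M w := by
    rw [← hpw]
    exact Finset.single_le_sum (fun w _ => pathWeight_nonneg hA w) hmem
  refine le_trans h1 ?_
  unfold simplePathSum
  apply Finset.single_le_sum (f := fun p => ∑ w ∈ Finset.univ.filter
      (fun w : Fin (p + 2) → Fin m => Function.Injective w ∧ w 0 = j ∧
        w (Fin.last (p + 1)) = i ∧ ∀ k, w k = j ∨ w k = i ∨ w k ∈ S), pathWeight M w)
  · intro p _
    exact Finset.sum_nonneg fun w _ => pathWeight_nonneg hA w
  · simpa using hm

lemma slice_ext_le {m : ℕ} {M : Matrix (Fin m) (Fin m) ℝ}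
    (hA : ∀ u v, 0 ≤ M u v) {i j k : Fin m} {S S' : Finset (Fin m)}
    (hji : j ≠ i) (hki : k ≠ i) (hiS' : i ∉ S') (hS'S : ∀ x ∈ S', x ∈ S) (hjS : j ∈ S)
    (p : ℕ) :
    (∑ w ∈ Finset.univ.filter
      (fun w : Fin (p + 2) → Fin m => Function.Injective w ∧ w 0 = k ∧
        w (Fin.last (p + 1)) = j ∧ ∀ t, w t = k ∨ w t = j ∨ w t ∈ S'),
      pathWeight M w) * M j i ≤
    ∑ w ∈ Finset.univ.filter
      (fun w : Fin (p + 1 + 2) → Fin m => Function.Injective w ∧ w 0 = k ∧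
        w (Fin.last (p + 1 + 1)) = i ∧ ∀ t, w t = k ∨ w t = i ∨ w t ∈ S),
      pathWeight M w := by
  classical
  rw [Finset.sum_mul]
  have hre : ∀ w ∈ Finset.univ.filter
      (fun w : Fin (p + 2) → Fin m => Function.Injective w ∧ w 0 = k ∧
        w (Fin.last (p + 1)) = j ∧ ∀ t, w t = k ∨ w t = j ∨ w t ∈ S'),
      pathWeight M w * M j i = pathWeight M (Fin.snoc w i : Fin (p + 3) → Fin m) := by
    intro w hw
    rw [Finset.mem_filter] at hw
    rw [pathWeight_snoc, hw.2.2.2.1]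
  rw [Finset.sum_congr rfl hre]
  have hinj : Set.InjOn (fun w : Fin (p + 2) → Fin m => (Fin.snoc w i : Fin (p + 3) → Fin m))
      (Finset.univ.filter
      (fun w : Fin (p + 2) → Fin m => Function.Injective w ∧ w 0 = k ∧
        w (Fin.last (p + 1)) = j ∧ ∀ t, w t = k ∨ w t = j ∨ w t ∈ S')) := by
    intro a _ b _ hab
    funext u
    have := congrFun hab u.castSucc
    simpa [Fin.snoc_castSucc] using this
  rw [← Finset.sum_image (fun a ha b hb hab => hinj ha hb hab)]
  apply Finset.sum_le_sum_of_subset_of_nonneg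
  · intro v hv
    rw [Finset.mem_image] at hv
    obtain ⟨w, hw, rfl⟩ := hv
    rw [Finset.mem_filter] at hw
    obtain ⟨-, hwinj, hw0, hwl, hwmem⟩ := hw
    have hnoti : ∀ u, w u ≠ i := by
      intro u hu
      rcases hwmem u with h | h | h
      · exact hki (h.symm.trans hu)
      · exact hji (h.symm.trans hu)
      · exact hiS' (hu ▸ h)
    rw [Finset.mem_filter]
    refine ⟨Finset.mem_univ _, snoc_injective hwinj hnoti, ?_, ?_, ?_⟩
    · rw [show (0 : Fin (p + 3)) = Fin.castSucc 0 from rfl, Fin.snoc_castSucc]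
      exact hw0
    · exact Fin.snoc_last _ _
    · intro u
      induction u using Fin.lastCases with
      | last => rw [Fin.snoc_last]; exact Or.inr (Or.inl rfl)
      | cast u =>
        rw [Fin.snoc_castSucc]
        rcases hwmem u with h | h | h
        · exact Or.inl h
        · exact Or.inr (Or.inr (h ▸ hjS))
        · exact Or.inr (Or.inr (hS'S _ h))
  · intro v _ _
    exact pathWeight_nonneg hA v

lemma ext_le_simplePathSum {m : ℕ} {M : Matrix (Fin m) (Fin m) ℝ}
    (hA : ∀ u v, 0 ≤ M u v) {i j k : Fin m} {S S' : Finset (Fin m)}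
    (hji : j ≠ i) (hki : k ≠ i) (hiS' : i ∉ S') (hS'S : ∀ x ∈ S', x ∈ S) (hjS : j ∈ S) :
    simplePathSum M k j S' * M j i ≤ simplePathSum M k i S := by
  classical
  have hm : 0 < m := Fin.pos i
  obtain ⟨n, rfl⟩ : ∃ n, m = n + 1 := ⟨m - 1, (Nat.succ_pred_eq_of_pos hm).symm⟩
  unfold simplePathSum
  rw [Finset.sum_mul]
  rw [Finset.sum_range_succ, Finset.sum_range_succ']
  have hstop : (∑ w ∈ Finset.univ.filter
      (fun w : Fin (n + 2) → Fin (n + 1) => Function.Injective w ∧ w 0 = k ∧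
        w (Fin.last (n + 1)) = j ∧ ∀ t, w t = k ∨ w t = j ∨ w t ∈ S'),
      pathWeight M w) * M j i = 0 := by
    rw [Finset.sum_eq_zero, zero_mul]
    intro w hw
    exfalso
    rw [Finset.mem_filter] at hw
    have := Fintype.card_le_of_injective w hw.2.1
    simp at this
  rw [hstop, add_zero]
  have h1 : ∀ p ∈ Finset.range n,
      (∑ w ∈ Finset.univ.filter
      (fun w : Fin (p + 2) → Fin (n + 1) => Function.Injective w ∧ w 0 = k ∧
        w (Fin.last (p + 1)) = j ∧ ∀ t, w t = k ∨ w t = j ∨ w t ∈ S'),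
      pathWeight M w) * M j i ≤
      ∑ w ∈ Finset.univ.filter
      (fun w : Fin (p + 1 + 2) → Fin (n + 1) => Function.Injective w ∧ w 0 = k ∧
        w (Fin.last (p + 1 + 1)) = i ∧ ∀ t, w t = k ∨ w t = i ∨ w t ∈ S),
      pathWeight M w := fun p _ => slice_ext_le hA hji hki hiS' hS'S hjS p
  have h2 := Finset.sum_le_sum h1
  refine le_trans h2 ?_
  have h3 : 0 ≤ ∑ w ∈ Finset.univ.filter
      (fun w : Fin (0 + 2) → Fin (n + 1) => Function.Injective w ∧ w 0 = k ∧
        w (Fin.last (0 + 1)) = i ∧ ∀ t, w t = k ∨ w t = i ∨ w t ∈ S),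
      pathWeight M w := Finset.sum_nonneg fun w _ => pathWeight_nonneg hA w
  linarith

lemma exists_descent {m p : ℕ} (W : Fin (p + 2) → Fin m)
    (h0 : W 0 = W (Fin.last (p + 1))) (hne : ∃ t, W t ≠ W 0) :
    ∃ k : Fin (p + 1), W k.succ < W k.castSucc := by
  by_contra h
  push_neg at h
  have hmono : Monotone W := Fin.monotone_iff_le_succ.mpr fun k => h k
  obtain ⟨t, ht⟩ := hne
  apply ht
  apply le_antisymm
  · rw [h0]
    exact hmono (Fin.le_last t)
  · exact hmono (Fin.zero_le t)
theorem stmt16 (m : ℕ) (hm : 0 < m) (M : ℝ → Matrix (Fin m) (Fin m) ℝ)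
    (hnn : ∀ ε > (0:ℝ), ∀ i j, 0 ≤ M ε i j)
    (hirr : ∀ ε > (0:ℝ), ∀ i j, ∃ n : ℕ, 0 < (M ε ^ n) i j)
    -- (M.1)
    (hM1 : ∀ i j, (∀ ε > (0:ℝ), 0 < M ε i j) ∨ (∀ ε > (0:ℝ), M ε i j = 0))
    -- (M.2)
    (hM2 : ∃ c > (0:ℝ), ∀ ε > (0:ℝ), ∀ i j, i < j → M ε i j ≤ c)
    -- (M.3)
    (hM3 : ∀ i j : Fin m, j < i → Tendsto (fun ε => M ε i j) (𝓝[>] 0) (𝓝 0))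
    -- (M.4)
    (η : Fin m → ℝ) (hη0 : ∀ i, 0 ≤ η i)
    (hM4 : ∀ i, Tendsto (fun ε => M ε i i) (𝓝[>] 0) (𝓝 (η i)))
    (T0 T1 : Finset (Fin m))
    (hT0 : ∀ i, i ∈ T0 ↔ ∀ j, η j ≤ η i) (hT1 : T1 = T0ᶜ)
    -- right Perron eigenvector, normalized
    (eig : ℝ → ℝ) (b : ℝ → Fin m → ℝ)
    (hbpos : ∀ ε > (0:ℝ), ∀ i, 0 < b ε i)
    (hbsum : ∀ ε > (0:ℝ), ∑ i, b ε i = 1)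
    (hbeig : ∀ ε > (0:ℝ), (M ε).mulVec (b ε) = eig ε • b ε)
    -- left Perron eigenvector, normalized by `∑ b_ε(i) c_ε(i) = 1`
    (c : ℝ → Fin m → ℝ)
    (hcpos : ∀ ε > (0:ℝ), ∀ i, 0 < c ε i)
    (hceig : ∀ ε > (0:ℝ), (M ε).vecMul (c ε) = eig ε • c ε)
    (hbcsum : ∀ ε > (0:ℝ), ∑ i, b ε i * c ε i = 1) :
    ∀ i ∈ T1, AsympF (fun ε => c ε i)
      (fun ε => ∑ j ∈ T0, simplePathSum (M ε) j i T1 * c ε j) := by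
  classical
  -- left eigen-equation, coordinatewise
  have hvec : ∀ ε, 0 < ε → ∀ v, ∑ u, c ε u * M ε u v = eig ε * c ε v := by
    intro ε hε v
    have h := congrFun (hceig ε hε) v
    simpa [Matrix.vecMul, dotProduct] using h
  have hstep : ∀ ε, 0 < ε → ∀ u v, M ε u v * c ε u ≤ eig ε * c ε v := by
    intro ε hε u v
    rw [← hvec ε hε v, mul_comm]
    exact Finset.single_le_sum
      (fun x _ => mul_nonneg (hcpos ε hε x).le (hnn ε hε x v)) (Finset.mem_univ u)
  have hlam0 : ∀ ε, 0 < ε → 0 ≤ eig ε := by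
    intro ε hε
    have h := hvec ε hε ⟨0, hm⟩
    have h2 : 0 ≤ ∑ u, c ε u * M ε u ⟨0, hm⟩ :=
      Finset.sum_nonneg fun x _ => mul_nonneg (hcpos ε hε x).le (hnn ε hε x _)
    rw [h] at h2
    have := hcpos ε hε ⟨0, hm⟩
    nlinarith
  have hdiag_le : ∀ ε, 0 < ε → ∀ v, M ε v v ≤ eig ε := by
    intro ε hε v
    exact le_of_mul_le_mul_right (hstep ε hε v v) (hcpos ε hε v)
  -- the maximal η
  obtain ⟨i₀, -, hi₀max⟩ :=
    Finset.exists_max_image Finset.univ η ⟨⟨0, hm⟩, Finset.mem_univ _⟩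
  have hmax : ∀ j, η j ≤ η i₀ := fun j => hi₀max j (Finset.mem_univ j)
  have hlt : ∀ k ∈ T1, η k < η i₀ := by
    intro k hk
    rw [hT1, Finset.mem_compl, hT0] at hk
    push_neg at hk
    obtain ⟨j, hj⟩ := hk
    exact lt_of_lt_of_le hj (hmax j)
  -- uniform entry bound
  obtain ⟨c₀, hc₀pos, hc₀⟩ := hM2
  set C : ℝ := max 1 (max c₀ (η i₀ + 1)) with hCdef
  have hC1 : (1:ℝ) ≤ C := le_max_left _ _
  have hCev : ∀ᶠ ε in 𝓝[>](0:ℝ), ∀ u v : Fin m, M ε u v ≤ C := by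
    rw [eventually_all]
    intro u
    rw [eventually_all]
    intro v
    rcases lt_trichotomy u v with h | h | h
    · filter_upwards [self_mem_nhdsWithin] with ε hε
      exact le_trans (hc₀ ε hε u v h) (le_trans (le_max_left _ _) (le_max_right _ _))
    · subst h
      have h2 : ∀ᶠ ε in 𝓝[>](0:ℝ), M ε u u < η u + 1 :=
        (hM4 u).eventually_lt_const (by linarith)
      filter_upwards [h2] with ε hε
      have : η u + 1 ≤ η i₀ + 1 := by linarith [hmax u]
      exact le_trans hε.le (le_trans this (le_trans (le_max_right _ _) (le_max_right _ _)))
    · have h2 : ∀ᶠ ε in 𝓝[>](0:ℝ), M ε u v < 1 :=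
        (hM3 u v h).eventually_lt_const one_pos
      filter_upwards [h2] with ε hε
      exact le_trans hε.le hC1
  -- eigenvalue upper bound
  have hlamub : ∀ᶠ ε in 𝓝[>](0:ℝ), eig ε ≤ (m:ℝ) * C := by
    filter_upwards [hCev, self_mem_nhdsWithin] with ε hCb hε
    have hb := hbeig ε hε
    have h1 : ∑ v, ((M ε).mulVec (b ε)) v = eig ε := by
      rw [hb]
      simp only [Pi.smul_apply, smul_eq_mul]
      rw [← Finset.mul_sum, hbsum ε hε, mul_one]
    have h2 : ∑ v, ((M ε).mulVec (b ε)) v = ∑ u, (∑ v, M ε v u) * b ε u := by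
      simp only [Matrix.mulVec, dotProduct]
      rw [Finset.sum_comm]
      simp [Finset.sum_mul]
    have h3 : ∑ u, (∑ v, M ε v u) * b ε u ≤ ∑ u, ((m:ℝ) * C) * b ε u := by
      apply Finset.sum_le_sum
      intro u _
      apply mul_le_mul_of_nonneg_right _ (hbpos ε hε u).le
      calc ∑ v, M ε v u ≤ ∑ _v : Fin m, C := Finset.sum_le_sum fun v _ => hCb v u
        _ = (m:ℝ) * C := by simp [mul_comm]
    rw [← h1, h2]
    calc ∑ u, (∑ v, M ε v u) * b ε u ≤ ∑ u, ((m:ℝ) * C) * b ε u := h3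
      _ = ((m:ℝ) * C) * ∑ u, b ε u := by rw [Finset.mul_sum]
      _ = (m:ℝ) * C := by rw [hbsum ε hε, mul_one]
  -- the spectral gap at vertices of T1
  have hgap : ∀ k ∈ T1, ∃ d : ℝ, 0 < d ∧ ∀ᶠ ε in 𝓝[>](0:ℝ), M ε k k + d ≤ eig ε := by
    intro k hk
    have hg : 0 < η i₀ - η k := by linarith [hlt k hk]
    refine ⟨(η i₀ - η k) / 2, by linarith, ?_⟩
    have e1 : ∀ᶠ ε in 𝓝[>](0:ℝ), M ε k k < η k + (η i₀ - η k) / 4 :=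
      (hM4 k).eventually_lt_const (by linarith)
    have e2 : ∀ᶠ ε in 𝓝[>](0:ℝ), η i₀ - (η i₀ - η k) / 4 < M ε i₀ i₀ :=
      (hM4 i₀).eventually_const_lt (by linarith)
    filter_upwards [e1, e2, self_mem_nhdsWithin] with ε h1 h2 hε
    have h3 := hdiag_le ε hε i₀
    linarith
  -- products along cycles tend to zero
  have hcyc : ∀ (a₁ b₁ : Fin m), b₁ ≠ a₁ → ∀ S : Finset (Fin m),
      Tendsto (fun ε => simplePathSum (M ε) a₁ b₁ S * M ε b₁ a₁) (𝓝[>](0:ℝ)) (𝓝 0) := by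
    intro a₁ b₁ hba S
    have hrw : (fun ε => simplePathSum (M ε) a₁ b₁ S * M ε b₁ a₁) =
        fun ε => ∑ p ∈ Finset.range m, ∑ w ∈ Finset.univ.filter
          (fun w : Fin (p + 2) → Fin m => Function.Injective w ∧ w 0 = a₁ ∧
            w (Fin.last (p + 1)) = b₁ ∧ ∀ t, w t = a₁ ∨ w t = b₁ ∨ w t ∈ S),
          (pathWeight (M ε) w * M ε b₁ a₁) := by
      funext ε
      unfold simplePathSum
      rw [Finset.sum_mul]
      exact Finset.sum_congr rfl fun p _ => Finset.sum_mul _ _ _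
    have hterm : ∀ p ∈ Finset.range m, ∀ w ∈ Finset.univ.filter
          (fun w : Fin (p + 2) → Fin m => Function.Injective w ∧ w 0 = a₁ ∧
            w (Fin.last (p + 1)) = b₁ ∧ ∀ t, w t = a₁ ∨ w t = b₁ ∨ w t ∈ S),
        Tendsto (fun ε => pathWeight (M ε) w * M ε b₁ a₁) (𝓝[>](0:ℝ)) (𝓝 0) := by
      intro p _ w hw
      rw [Finset.mem_filter] at hw
      obtain ⟨-, hinj, hw0, hwl, -⟩ := hw
      set W : Fin (p + 3) → Fin m := Fin.snoc w a₁ with hWdef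
      have hprod : ∀ ε, pathWeight (M ε) w * M ε b₁ a₁ = pathWeight (M ε) W := by
        intro ε
        rw [hWdef, pathWeight_snoc, hwl]
      have hW0 : W 0 = W (Fin.last (p + 2)) := by
        rw [hWdef, Fin.snoc_last]
        rw [show (0 : Fin (p + 3)) = Fin.castSucc 0 from rfl, Fin.snoc_castSucc, hw0]
      have hWcast0 : W 0 = a₁ := by
        rw [hWdef, show (0 : Fin (p + 3)) = Fin.castSucc 0 from rfl, Fin.snoc_castSucc, hw0]
      have hWne : ∃ t, W t ≠ W 0 := by
        refine ⟨Fin.castSucc (Fin.last (p + 1)), ?_⟩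
        rw [hWcast0, hWdef, Fin.snoc_castSucc, hwl]
        exact hba
      obtain ⟨k₀, hk₀⟩ := exists_descent W hW0 hWne
      apply squeeze_zero' (g := fun ε => C ^ (p + 1) * M ε (W k₀.castSucc) (W k₀.succ))
      · filter_upwards [self_mem_nhdsWithin] with ε hε
        exact mul_nonneg (pathWeight_nonneg (hnn ε hε) w) (hnn ε hε b₁ a₁)
      · filter_upwards [hCev, self_mem_nhdsWithin] with ε hCb hε
        rw [hprod ε]
        show pathWeight (M ε) W ≤ _
        unfold pathWeight
        rw [← Finset.prod_erase_mul _ _ (Finset.mem_univ k₀)]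
        apply mul_le_mul_of_nonneg_right _ (hnn ε hε _ _)
        calc ∏ x ∈ Finset.univ.erase k₀, M ε (W x.castSucc) (W x.succ)
            ≤ ∏ _x ∈ Finset.univ.erase k₀, C :=
              Finset.prod_le_prod (fun x _ => hnn ε hε _ _) (fun x _ => hCb _ _)
          _ = C ^ (Finset.univ.erase k₀).card := Finset.prod_const C
          _ = C ^ (p + 1) := by
              rw [Finset.card_erase_of_mem (Finset.mem_univ _)]
              simp
      · have hten := hM3 (W k₀.castSucc) (W k₀.succ) hk₀
        have := hten.const_mul (C ^ (p + 1))
        simpa using this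
    rw [hrw]
    have h1 := tendsto_finset_sum (f := fun p ε => ∑ w ∈ Finset.univ.filter
          (fun w : Fin (p + 2) → Fin m => Function.Injective w ∧ w 0 = a₁ ∧
            w (Fin.last (p + 1)) = b₁ ∧ ∀ t, w t = a₁ ∨ w t = b₁ ∨ w t ∈ S),
        pathWeight (M ε) w * M ε b₁ a₁) (x := 𝓝[>](0:ℝ)) (a := fun _ => 0) (Finset.range m) ?_
    · simpa using h1
    · intro p hp
      have h2 := tendsto_finset_sum (f := fun w ε => pathWeight (M ε) w * M ε b₁ a₁)
        (x := 𝓝[>](0:ℝ)) (a := fun _ => 0) (Finset.univ.filter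
          (fun w : Fin (p + 2) → Fin m => Function.Injective w ∧ w 0 = a₁ ∧
            w (Fin.last (p + 1)) = b₁ ∧ ∀ t, w t = a₁ ∨ w t = b₁ ∨ w t ∈ S))
        (fun w hw => hterm p hp w hw)
      simpa using h2
  -- main upper bound, by strong induction on S
  have mainUB : ∀ S : Finset (Fin m), (∀ x ∈ S, x ∈ T1) → ∀ i' ∈ S,
      ∃ K : ℝ, 0 ≤ K ∧ ∀ᶠ ε in 𝓝[>](0:ℝ),
        c ε i' ≤ K * ∑ j ∈ Sᶜ, simplePathSum (M ε) j i' S * c ε j := by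
    intro S
    induction S using Finset.strongInduction with
    | _ S ih =>
      intro hST1 i' hi'S
      obtain ⟨d, hd, hdev⟩ := hgap i' (hST1 i' hi'S)
      -- constants from the induction hypothesis on S.erase i'
      have hch : ∀ j : Fin m, ∃ K : ℝ, 0 ≤ K ∧ (j ∈ S.erase i' → ∀ᶠ ε in 𝓝[>](0:ℝ),
          c ε j ≤ K * ∑ k ∈ (S.erase i')ᶜ, simplePathSum (M ε) k j (S.erase i') * c ε k) := by
        intro j
        by_cases hj : j ∈ S.erase i'
        · obtain ⟨K, hK0, hKev⟩ := ih (S.erase i') (Finset.erase_ssubset hi'S)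
            (fun x hx => hST1 x (Finset.mem_of_mem_erase hx)) j hj
          exact ⟨K, hK0, fun _ => hKev⟩
        · exact ⟨0, le_refl 0, fun h => absurd h hj⟩
      choose K hK0 hKev using hch
      -- the cycle coefficient tends to zero
      have hA0 : Tendsto (fun ε => ∑ j ∈ S.erase i',
          K j * (simplePathSum (M ε) i' j (S.erase i') * M ε j i')) (𝓝[>](0:ℝ)) (𝓝 0) := by
        have h1 := tendsto_finset_sum (x := 𝓝[>](0:ℝ))
          (f := fun j ε => K j * (simplePathSum (M ε) i' j (S.erase i') * M ε j i'))
          (a := fun _ => 0) (S.erase i') ?_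
        · simpa using h1
        · intro j hj
          have := (hcyc i' j (Finset.ne_of_mem_erase hj) (S.erase i')).const_mul (K j)
          simpa using this
      have hAev : ∀ᶠ ε in 𝓝[>](0:ℝ), ∑ j ∈ S.erase i',
          K j * (simplePathSum (M ε) i' j (S.erase i') * M ε j i') ≤ d / 2 :=
        (hA0.eventually_lt_const (by linarith)).mono fun _ h => h.le
      -- finset identities
      have heq2 : ((S.erase i')ᶜ).erase i' = Sᶜ := by
        ext x
        simp only [Finset.mem_erase, Finset.mem_compl]
        constructor
        · rintro ⟨hx1, hx2⟩
          intro hxS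
          exact hx2 ⟨hx1, hxS⟩
        · intro hx
          refine ⟨?_, ?_⟩
          · intro he; subst he; exact hx hi'S
          · rintro ⟨-, hxS⟩; exact hx hxS
      have hmemi' : i' ∈ (S.erase i')ᶜ := by
        rw [Finset.mem_compl]
        simp
      have heq1 : Finset.univ.erase i' = Sᶜ ∪ S.erase i' := by
        ext x
        simp only [Finset.mem_erase, Finset.mem_union, Finset.mem_compl, Finset.mem_univ,
          and_true]
        constructor
        · intro hx
          by_cases hxS : x ∈ S
          · exact Or.inr ⟨hx, hxS⟩
          · exact Or.inl hxS
        · rintro (h | ⟨h, -⟩)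
          · intro he; subst he; exact h hi'S
          · exact h
      have hdisj : Disjoint Sᶜ (S.erase i') := by
        rw [Finset.disjoint_left]
        intro x hx hx2
        exact (Finset.mem_compl.mp hx) (Finset.mem_of_mem_erase hx2)
      have hKsum0 : 0 ≤ ∑ j ∈ S.erase i', K j := Finset.sum_nonneg fun j _ => hK0 j
      refine ⟨(2 / d) * (1 + ∑ j ∈ S.erase i', K j),
        mul_nonneg (by positivity) (by linarith), ?_⟩
      filter_upwards [self_mem_nhdsWithin, hdev, hAev,
        (eventually_all_finset (S.erase i')).mpr (fun j hj => hKev j hj)]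
        with ε hε hdε hAε hKε
      have hε' : (0:ℝ) < ε := hε
      -- the eigen identity split
      have h1 : eig ε * c ε i' = c ε i' * M ε i' i' +
          ∑ u ∈ Finset.univ.erase i', c ε u * M ε u i' := by
        rw [← hvec ε hε' i', ← Finset.add_sum_erase _ _ (Finset.mem_univ i')]
      have h2 : ∑ u ∈ Finset.univ.erase i', c ε u * M ε u i' =
          ∑ u ∈ Sᶜ, c ε u * M ε u i' + ∑ u ∈ S.erase i', c ε u * M ε u i' := by
        rw [heq1, Finset.sum_union hdisj]
      have h3 : d * c ε i' ≤
          ∑ u ∈ Sᶜ, c ε u * M ε u i' + ∑ u ∈ S.erase i', c ε u * M ε u i' := by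
        have hc' := (hcpos ε hε' i').le
        have hmul : d * c ε i' ≤ (eig ε - M ε i' i') * c ε i' :=
          mul_le_mul_of_nonneg_right (by linarith) hc'
        have hsub : (eig ε - M ε i' i') * c ε i' =
            ∑ u ∈ Sᶜ, c ε u * M ε u i' + ∑ u ∈ S.erase i', c ε u * M ε u i' := by
          linear_combination h1 + h2
        linarith
      -- bound the middle sum using the induction hypothesis
      have h4 : ∑ u ∈ S.erase i', c ε u * M ε u i' ≤
          (∑ j ∈ S.erase i', K j * (simplePathSum (M ε) i' j (S.erase i') * M ε j i')) * c ε i'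
          + ∑ j ∈ S.erase i',
              (K j * ∑ k ∈ Sᶜ, simplePathSum (M ε) k j (S.erase i') * c ε k) * M ε j i' := by
        rw [Finset.sum_mul, ← Finset.sum_add_distrib]
        apply Finset.sum_le_sum
        intro u hu
        have hcu := hKε u hu
        have hdecomp : ∑ k ∈ (S.erase i')ᶜ, simplePathSum (M ε) k u (S.erase i') * c ε k =
            simplePathSum (M ε) i' u (S.erase i') * c ε i' +
            ∑ k ∈ Sᶜ, simplePathSum (M ε) k u (S.erase i') * c ε k := by
          rw [← Finset.add_sum_erase _ _ hmemi', heq2]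
        have hcu2 : c ε u ≤ K u * (simplePathSum (M ε) i' u (S.erase i') * c ε i' +
            ∑ k ∈ Sᶜ, simplePathSum (M ε) k u (S.erase i') * c ε k) := by
          rw [← hdecomp]; exact hcu
        calc c ε u * M ε u i'
            ≤ (K u * (simplePathSum (M ε) i' u (S.erase i') * c ε i' +
              ∑ k ∈ Sᶜ, simplePathSum (M ε) k u (S.erase i') * c ε k)) * M ε u i' :=
              mul_le_mul_of_nonneg_right hcu2 (hnn ε hε' u i')
          _ = K u * (simplePathSum (M ε) i' u (S.erase i') * M ε u i') * c ε i' +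
              (K u * ∑ k ∈ Sᶜ, simplePathSum (M ε) k u (S.erase i') * c ε k) * M ε u i' := by
              ring
      have h5 : (∑ j ∈ S.erase i',
          K j * (simplePathSum (M ε) i' j (S.erase i') * M ε j i')) * c ε i' ≤
          (d / 2) * c ε i' :=
        mul_le_mul_of_nonneg_right hAε (hcpos ε hε' i').le
      have h6 : ∑ j ∈ S.erase i',
          (K j * ∑ k ∈ Sᶜ, simplePathSum (M ε) k j (S.erase i') * c ε k) * M ε j i' ≤
          (∑ j ∈ S.erase i', K j) *
            ∑ k ∈ Sᶜ, simplePathSum (M ε) k i' S * c ε k := by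
        rw [Finset.sum_mul]
        apply Finset.sum_le_sum
        intro j hj
        have hji : j ≠ i' := Finset.ne_of_mem_erase hj
        have inner : ∀ k ∈ Sᶜ,
            (simplePathSum (M ε) k j (S.erase i') * c ε k) * M ε j i' ≤
            simplePathSum (M ε) k i' S * c ε k := by
          intro k hk
          have hki : k ≠ i' := by
            intro he; subst he; exact (Finset.mem_compl.mp hk) hi'S
          have hext := ext_le_simplePathSum (hnn ε hε') hji hki
            (Finset.notMem_erase i' S) (fun x hx => Finset.mem_of_mem_erase hx)
            (Finset.mem_of_mem_erase hj) (k := k)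
          calc (simplePathSum (M ε) k j (S.erase i') * c ε k) * M ε j i'
              = (simplePathSum (M ε) k j (S.erase i') * M ε j i') * c ε k := by ring
            _ ≤ simplePathSum (M ε) k i' S * c ε k :=
                mul_le_mul_of_nonneg_right hext (hcpos ε hε' k).le
        calc (K j * ∑ k ∈ Sᶜ, simplePathSum (M ε) k j (S.erase i') * c ε k) * M ε j i'
            = K j * ∑ k ∈ Sᶜ, (simplePathSum (M ε) k j (S.erase i') * c ε k) * M ε j i' := by
              rw [mul_assoc, Finset.sum_mul]
          _ ≤ K j * ∑ k ∈ Sᶜ, simplePathSum (M ε) k i' S * c ε k :=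
              mul_le_mul_of_nonneg_left (Finset.sum_le_sum inner) (hK0 j)
      have h7 : ∑ u ∈ Sᶜ, c ε u * M ε u i' ≤
          ∑ k ∈ Sᶜ, simplePathSum (M ε) k i' S * c ε k := by
        apply Finset.sum_le_sum
        intro u hu
        have hui : u ≠ i' := by
          intro he; subst he; exact (Finset.mem_compl.mp hu) hi'S
        calc c ε u * M ε u i' = M ε u i' * c ε u := by ring
          _ ≤ simplePathSum (M ε) u i' S * c ε u :=
              mul_le_mul_of_nonneg_right (edge_le_simplePathSum (hnn ε hε') hui S)
                (hcpos ε hε' u).le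
      -- put everything together
      set Sg : ℝ := ∑ k ∈ Sᶜ, simplePathSum (M ε) k i' S * c ε k with hSg
      have hSg0 : 0 ≤ Sg :=
        Finset.sum_nonneg fun k _ =>
          mul_nonneg (simplePathSum_nonneg (hnn ε hε') _ _ _) (hcpos ε hε' k).le
      have hexp : (1 + ∑ j ∈ S.erase i', K j) * Sg = Sg + (∑ j ∈ S.erase i', K j) * Sg := by
        ring
      have hfin : (d / 2) * c ε i' ≤ (1 + ∑ j ∈ S.erase i', K j) * Sg := by
        linarith [h3, h4, h5, h6, h7]
      calc c ε i' = (2 / d) * ((d / 2) * c ε i') := by field_simp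
        _ ≤ (2 / d) * ((1 + ∑ j ∈ S.erase i', K j) * Sg) :=
            mul_le_mul_of_nonneg_left hfin (by positivity)
        _ = (2 / d) * (1 + ∑ j ∈ S.erase i', K j) * Sg := by ring
  -- now prove the statement
  intro i hiT1
  set μ : ℝ := max 1 ((m:ℝ) * C) with hμ
  have hμ1 : (1:ℝ) ≤ μ := le_max_left _ _
  have hm1 : (1:ℝ) ≤ (m:ℝ) := by exact_mod_cast hm
  set K2 : ℝ := (m:ℝ) * ((m:ℝ) * ((m:ℝ)^(m+1) * μ^m)) with hK2def
  -- the easy direction: the path sum is dominated by `c ε i`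
  have hUB2 : ∀ᶠ ε in 𝓝[>](0:ℝ),
      ∑ j ∈ T0, simplePathSum (M ε) j i T1 * c ε j ≤ K2 * c ε i := by
    filter_upwards [self_mem_nhdsWithin, hlamub] with ε hε hlub
    have hε' : (0:ℝ) < ε := hε
    have hterm : ∀ (j : Fin m) (p : ℕ), p ∈ Finset.range m → ∀ w ∈ Finset.univ.filter
        (fun w : Fin (p + 2) → Fin m => Function.Injective w ∧ w 0 = j ∧
          w (Fin.last (p + 1)) = i ∧ ∀ t, w t = j ∨ w t = i ∨ w t ∈ T1),
        pathWeight (M ε) w * c ε j ≤ μ^m * c ε i := by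
      intro j p hp w hw
      rw [Finset.mem_filter] at hw
      rw [Finset.mem_range] at hp
      have hc := chainLe (M ε) (c ε) (eig ε) (hlam0 ε hε') (hnn ε hε') (hstep ε hε') p w
      rw [hw.2.2.1, hw.2.2.2.1] at hc
      calc pathWeight (M ε) w * c ε j ≤ eig ε ^ (p+1) * c ε i := hc
        _ ≤ μ^m * c ε i := by
            apply mul_le_mul_of_nonneg_right _ (hcpos ε hε' i).le
            calc eig ε ^ (p+1) ≤ μ^(p+1) :=
                pow_le_pow_left₀ (hlam0 ε hε') (le_trans hlub (le_max_right _ _)) _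
              _ ≤ μ^m := pow_le_pow_right₀ hμ1 (by omega)
    have hbound : ∀ j ∈ T0, simplePathSum (M ε) j i T1 * c ε j ≤
        (m:ℝ) * ((m:ℝ)^(m+1) * (μ^m * c ε i)) := by
      intro j hj
      unfold simplePathSum
      rw [Finset.sum_mul]
      have hpb : ∀ p ∈ Finset.range m,
          (∑ w ∈ Finset.univ.filter
            (fun w : Fin (p + 2) → Fin m => Function.Injective w ∧ w 0 = j ∧
              w (Fin.last (p + 1)) = i ∧ ∀ t, w t = j ∨ w t = i ∨ w t ∈ T1),
            pathWeight (M ε) w) * c ε j ≤ (m:ℝ)^(m+1) * (μ^m * c ε i) := by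
        intro p hp
        rw [Finset.sum_mul]
        have h1 := Finset.sum_le_card_nsmul (Finset.univ.filter
            (fun w : Fin (p + 2) → Fin m => Function.Injective w ∧ w 0 = j ∧
              w (Fin.last (p + 1)) = i ∧ ∀ t, w t = j ∨ w t = i ∨ w t ∈ T1))
          (fun w => pathWeight (M ε) w * c ε j) (μ^m * c ε i)
          (fun w hw => hterm j p hp w hw)
        refine le_trans h1 ?_
        rw [nsmul_eq_mul]
        apply mul_le_mul_of_nonneg_right _
          (mul_nonneg (pow_nonneg (le_trans zero_le_one hμ1) m) (hcpos ε hε' i).le)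
        rw [Finset.mem_range] at hp
        calc ((Finset.univ.filter
            (fun w : Fin (p + 2) → Fin m => Function.Injective w ∧ w 0 = j ∧
              w (Fin.last (p + 1)) = i ∧ ∀ t, w t = j ∨ w t = i ∨ w t ∈ T1)).card : ℝ)
            ≤ ((Finset.univ : Finset (Fin (p + 2) → Fin m)).card : ℝ) := by
              exact_mod_cast Finset.card_filter_le _ _
          _ = ((m:ℝ))^(p+2) := by
              rw [Finset.card_univ, Fintype.card_fun]
              push_cast
              simp
          _ ≤ (m:ℝ)^(m+1) := pow_le_pow_right₀ hm1 (by omega)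
      calc ∑ p ∈ Finset.range m, (∑ w ∈ Finset.univ.filter
            (fun w : Fin (p + 2) → Fin m => Function.Injective w ∧ w 0 = j ∧
              w (Fin.last (p + 1)) = i ∧ ∀ t, w t = j ∨ w t = i ∨ w t ∈ T1),
            pathWeight (M ε) w) * c ε j
          ≤ ∑ _p ∈ Finset.range m, (m:ℝ)^(m+1) * (μ^m * c ε i) := Finset.sum_le_sum hpb
        _ = (m:ℝ) * ((m:ℝ)^(m+1) * (μ^m * c ε i)) := by
            rw [Finset.sum_const, Finset.card_range, nsmul_eq_mul]
    calc ∑ j ∈ T0, simplePathSum (M ε) j i T1 * c ε j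
        ≤ ∑ _j ∈ T0, (m:ℝ) * ((m:ℝ)^(m+1) * (μ^m * c ε i)) := Finset.sum_le_sum hbound
      _ = (T0.card : ℝ) * ((m:ℝ) * ((m:ℝ)^(m+1) * (μ^m * c ε i))) := by
          rw [Finset.sum_const, nsmul_eq_mul]
      _ ≤ (m:ℝ) * ((m:ℝ) * ((m:ℝ)^(m+1) * (μ^m * c ε i))) := by
          apply mul_le_mul_of_nonneg_right
          · have : T0.card ≤ m := by
              have := Finset.card_le_univ T0
              simpa using this
            exact_mod_cast this
          · exact mul_nonneg (by positivity) (mul_nonneg (by positivity)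
              (mul_nonneg (pow_nonneg (le_trans zero_le_one hμ1) m) (hcpos ε hε' i).le))
      _ = K2 * c ε i := by rw [hK2def]; ring
  -- the hard direction, from `mainUB` applied to `S = T1`
  obtain ⟨K1, hK10, hK1⟩ := mainUB T1 (fun x hx => hx) i hiT1
  have hcompl : T1ᶜ = T0 := by rw [hT1, compl_compl]
  simp only [hcompl] at hK1
  set Kf : ℝ := max 1 (max K1 K2) with hKf
  have hKf1 : (1:ℝ) ≤ Kf := le_max_left _ _
  have hKfpos : (0:ℝ) < Kf := lt_of_lt_of_le one_pos hKf1
  have hev : ∀ᶠ ε in 𝓝[>](0:ℝ),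
      Kf⁻¹ * (∑ j ∈ T0, simplePathSum (M ε) j i T1 * c ε j) ≤ c ε i ∧
      c ε i ≤ Kf * (∑ j ∈ T0, simplePathSum (M ε) j i T1 * c ε j) := by
    filter_upwards [hK1, hUB2, self_mem_nhdsWithin] with ε h1 h2 hε
    have hε' : (0:ℝ) < ε := hε
    have hS0 : 0 ≤ ∑ j ∈ T0, simplePathSum (M ε) j i T1 * c ε j :=
      Finset.sum_nonneg fun j _ =>
        mul_nonneg (simplePathSum_nonneg (hnn ε hε') _ _ _) (hcpos ε hε' j).le
    constructor
    · rw [inv_mul_le_iff₀ hKfpos]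
      calc ∑ j ∈ T0, simplePathSum (M ε) j i T1 * c ε j ≤ K2 * c ε i := h2
        _ ≤ Kf * c ε i := mul_le_mul_of_nonneg_right
            (le_trans (le_max_right K1 K2) (le_max_right 1 _)) (hcpos ε hε' i).le
    · calc c ε i ≤ K1 * ∑ j ∈ T0, simplePathSum (M ε) j i T1 * c ε j := h1
        _ ≤ Kf * ∑ j ∈ T0, simplePathSum (M ε) j i T1 * c ε j :=
            mul_le_mul_of_nonneg_right
              (le_trans (le_max_left K1 K2) (le_max_right 1 _)) hS0
  obtain ⟨u, hu, husub⟩ := mem_nhdsGT_iff_exists_Ioc_subset.mp hev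
  exact ⟨Kf, hKf1, u, hu, fun ε hε1 hε2 => husub ⟨hε1, hε2⟩⟩
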